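/- Let N_A, N_B ≥ 2, A : Matrix (Fin N_A) (Fin N_A) ℂ and B : Matrix (Fin N_B) (Fin N_B) ℂ. Then the trace norm of the realignment of the Kronecker product factorizes into Hilbert–Schmidt norms: ‖RM(A ⊗ₖ B)‖_tr = ‖A‖_HS · ‖B‖_HS. -/

import Mathlib

open Matrix Kronecker Complex ComplexOrder

noncomputable def traceNorm {m n : Type*} [Fintype m] [Fintype n] [DecidableEq n]
    (M : Matrix m n ℂ) : ℝ :=
  (((Matrix.posSemidef_conjTranspose_mul_self M).1.eigenvectorUnitary : Matrix n n ℂ) *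
    diagonal (fun i => ((Real.sqrt ((Matrix.posSemidef_conjTranspose_mul_self M).1.eigenvalues i) : ℝ) : ℂ)) *
    (star ((Matrix.posSemidef_conjTranspose_mul_self M).1.eigenvectorUnitary : Matrix n n ℂ))).trace.re

def realign {NA NB : ℕ} (ρ : Matrix (Fin NA × Fin NB) (Fin NA × Fin NB) ℂ) :
    Matrix (Fin NA × Fin NA) (Fin NB × Fin NB) ℂ :=
  fun p q => ρ (p.1, q.1) (p.2, q.2)

def IsDensityMatrix {n : Type*} [Fintype n] (ρ : Matrix n n ℂ) : Prop :=
  ρ.PosSemidef ∧ ρ.trace = 1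

noncomputable def hsNorm {m n : Type*} [Fintype m] [Fintype n] (M : Matrix m n ℂ) : ℝ :=
  Real.sqrt (∑ i, ∑ j, ‖M i j‖ ^ 2)

noncomputable def hsInner {m n : Type*} [Fintype m] [Fintype n] (X Y : Matrix m n ℂ) : ℂ :=
  (Xᴴ * Y).trace

noncomputable def marginalA {NA NB : ℕ} (ρ : Matrix (Fin NA × Fin NB) (Fin NA × Fin NB) ℂ) :
    Matrix (Fin NA) (Fin NA) ℂ :=
  fun m n => ∑ μ, ρ (m, μ) (n, μ)

noncomputable def marginalB {NA NB : ℕ} (ρ : Matrix (Fin NA × Fin NB) (Fin NA × Fin NB) ℂ) :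
    Matrix (Fin NB) (Fin NB) ℂ :=
  fun μ ν => ∑ m, ρ (m, μ) (m, ν)

def SeparableState {NA NB : ℕ} (ρ : Matrix (Fin NA × Fin NB) (Fin NA × Fin NB) ℂ) : Prop :=
  ∃ (ι : Type) (s : Finset ι) (p : ι → ℝ)
    (ρA : ι → Matrix (Fin NA) (Fin NA) ℂ) (ρB : ι → Matrix (Fin NB) (Fin NB) ℂ),
    (∀ i ∈ s, 0 < p i) ∧ (∑ i ∈ s, p i = 1) ∧
    (∀ i ∈ s, IsDensityMatrix (ρA i)) ∧ (∀ i ∈ s, IsDensityMatrix (ρB i)) ∧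
    ρ = ∑ i ∈ s, (p i : ℂ) • (ρA i ⊗ₖ ρB i)

noncomputable def l2OpNorm {n : Type*} [Fintype n] [DecidableEq n] (M : Matrix n n ℂ) : ℝ :=
  ‖Matrix.toEuclideanCLM (𝕜 := ℂ) (n := n) M‖

/-! `realign (A ⊗ₖ B)` is the rank-one matrix `vec A (vec B)ᵀ`. For `M = u vᵀ` one has
`Mᴴ M = ‖u‖² P` with `P = v̄ vᵀ`, and `P² = ‖v‖² P`, so `√(Mᴴ M) = (‖u‖ / ‖v‖) P`, whose trace is
`‖u‖ ‖v‖`. -/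

section

open scoped MatrixOrder

variable {m n : Type*} [Fintype m] [Fintype n]

theorem traceNorm_eq_re_trace_sqrt [DecidableEq n] (M : Matrix m n ℂ) :
    traceNorm M = (CFC.sqrt (Mᴴ * M)).trace.re := by
  have hM := posSemidef_conjTranspose_mul_self M
  rw [CFC.sqrt_eq_real_sqrt _ hM.nonneg, cfcₙ_eq_cfc, hM.1.cfc_eq, IsHermitian.cfc,
    Unitary.conjStarAlgAut_apply]
  rfl

theorem star_dotProduct_self_eq_norm_sq (v : n → ℂ) :
    star v ⬝ᵥ v = ((‖WithLp.toLp 2 v‖ ^ 2 : ℝ) : ℂ) := by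
  rw [dotProduct_comm, ← EuclideanSpace.inner_toLp_toLp, inner_self_eq_norm_sq_to_K]
  norm_cast

theorem sqrt_conjTranspose_mul_self_vecMulVec [DecidableEq n] (u : m → ℂ) (v : n → ℂ) :
    CFC.sqrt ((vecMulVec u v)ᴴ * vecMulVec u v) =
      ((‖WithLp.toLp 2 u‖ / ‖WithLp.toLp 2 v‖ : ℝ) : ℂ) • vecMulVec (star v) v := by
  set a := ‖WithLp.toLp 2 u‖
  set b := ‖WithLp.toLp 2 v‖
  set P := vecMulVec (star v) v
  have hMM : (vecMulVec u v)ᴴ * vecMulVec u v = ((a ^ 2 : ℝ) : ℂ) • P := by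
    rw [conjTranspose_vecMulVec, vecMulVec_mul_vecMulVec,
      star_dotProduct_self_eq_norm_sq, vecMulVec_smul]
  have hPP : P * P = ((b ^ 2 : ℝ) : ℂ) • P := by
    rw [vecMulVec_mul_vecMulVec, dotProduct_comm, star_dotProduct_self_eq_norm_sq, vecMulVec_smul]
  refine CFC.sqrt_unique ?_ ((posSemidef_vecMulVec_star_self v).smul ?_).nonneg
  · rw [hMM, smul_mul_smul, hPP, smul_smul, ← Complex.ofReal_mul, ← Complex.ofReal_mul]
    rcases eq_or_ne b 0 with hb | hb
    · have hv : v = 0 := by simpa [b] using hb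
      simp [P, hv]
    · have hscalar : a / b * (a / b) * b ^ 2 = a ^ 2 := by field_simp
      rw [hscalar]
  · exact_mod_cast div_nonneg (norm_nonneg _) (norm_nonneg _)

theorem traceNorm_vecMulVec [DecidableEq n] (u : m → ℂ) (v : n → ℂ) :
    traceNorm (vecMulVec u v) = ‖WithLp.toLp 2 u‖ * ‖WithLp.toLp 2 v‖ := by
  rw [traceNorm_eq_re_trace_sqrt, sqrt_conjTranspose_mul_self_vecMulVec, trace_smul,
    trace_vecMulVec, star_dotProduct_self_eq_norm_sq, smul_eq_mul,
    ← Complex.ofReal_mul, Complex.ofReal_re]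
  rcases eq_or_ne ‖WithLp.toLp 2 v‖ 0 with hb | hb
  · simp [hb]
  · field_simp

theorem hsNorm_eq_norm_toLp_uncurry (A : Matrix m n ℂ) :
    hsNorm A = ‖WithLp.toLp 2 (Function.uncurry A)‖ := by
  rw [hsNorm, EuclideanSpace.norm_eq, Fintype.sum_prod_type]
  rfl

end

theorem realign_kronecker {NA NB : ℕ} (A : Matrix (Fin NA) (Fin NA) ℂ)
    (B : Matrix (Fin NB) (Fin NB) ℂ) :
    realign (A ⊗ₖ B) = vecMulVec (Function.uncurry A) (Function.uncurry B) :=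
  rfl

theorem traceNorm_realign_kronecker_general
    (NA NB : ℕ)
    (A : Matrix (Fin NA) (Fin NA) ℂ) (B : Matrix (Fin NB) (Fin NB) ℂ) :
    traceNorm (realign (A ⊗ₖ B)) = hsNorm A * hsNorm B := by
  rw [realign_kronecker, traceNorm_vecMulVec, hsNorm_eq_norm_toLp_uncurry,
    hsNorm_eq_norm_toLp_uncurry]

theorem traceNorm_realign_kronecker
    (NA NB : ℕ) (hNA : 2 ≤ NA) (hNB : 2 ≤ NB)
    (A : Matrix (Fin NA) (Fin NA) ℂ) (B : Matrix (Fin NB) (Fin NB) ℂ) :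
    traceNorm (realign (A ⊗ₖ B)) = hsNorm A * hsNorm B :=
  traceNorm_realign_kronecker_general NA NB A B
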